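/- Let m ≥ 2 be an integer. The minimum over the standard simplex {x ∈ ℝ^N : x_i ≥ 0, Σ x_i = 1} (for any N ≥ m) of (m+1)!·Σ_{I⊆[N], |I|=m+1} Π_{i∈I} x_i + Σ_{i=1}^N x_i^{m+1} equals 1/m^m. -/

import Mathlib

/-!
Write `P(x) = (m+1)! e_{m+1}(x) + ∑ xᵢ^{m+1}`. We prove the homogeneous bound
`(∑ xᵢ)^{m+1} ≤ m^m P(x)` for nonnegative `x` by induction on the number of coordinates.
With at most `m` coordinates `e_{m+1}` vanishes and the power-mean inequality gives the bound.
Otherwise merge the two smallest coordinates `a ≤ b` into one coordinate `a + b`: the power sum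
grows by `(a+b)^{m+1} - a^{m+1} - b^{m+1} ≤ (m+1)! a b^m`, while `e_{m+1}` drops by
`a b e_{m-1}(rest) ≥ a b^m`, because the at least `m - 1` remaining coordinates are all `≥ b`.
Equality holds for the uniform distribution on `m` coordinates.
-/

open Finset
open scoped Nat

namespace Finset

variable {ι R : Type*}

section CommSemiring

variable [CommSemiring R]

def esymm (s : Finset ι) (k : ℕ) (x : ι → R) : R :=
  ∑ I ∈ s.powersetCard k, ∏ i ∈ I, x i

theorem esymm_eq_zero_of_card_lt {s : Finset ι} {k : ℕ} (h : #s < k) (x : ι → R) :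
    s.esymm k x = 0 := by
  rw [esymm, powersetCard_eq_empty.2 h, sum_empty]

theorem esymm_congr {s : Finset ι} {x y : ι → R} (h : ∀ i ∈ s, x i = y i) (k : ℕ) :
    s.esymm k x = s.esymm k y :=
  sum_congr rfl fun _ hI => prod_congr rfl fun i hi => h i ((mem_powersetCard.1 hI).1 hi)

theorem esymm_eq_of_subset {s t : Finset ι} (hts : t ⊆ s) {x : ι → R}
    (hx : ∀ i ∈ s, i ∉ t → x i = 0) (k : ℕ) : s.esymm k x = t.esymm k x := by
  refine (sum_subset (powersetCard_mono hts) fun I hI hIt => ?_).symm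
  rw [mem_powersetCard] at hI hIt
  obtain ⟨i, hiI, hit⟩ := not_subset.1 fun h => hIt ⟨h, hI.2⟩
  exact prod_eq_zero hiI (hx i (hI.1 hiI) hit)

theorem esymm_insert_succ [DecidableEq ι] {s : Finset ι} {a : ι} (ha : a ∉ s) (k : ℕ)
    (x : ι → R) : (insert a s).esymm (k + 1) x = s.esymm (k + 1) x + x a * s.esymm k x := by
  have hnot : ∀ I ∈ s.powersetCard k, a ∉ I := fun I hI h => ha ((mem_powersetCard.1 hI).1 h)
  rw [esymm, powersetCard_succ_insert ha, sum_union, sum_image, esymm, esymm, mul_sum]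
  · exact congrArg _ (sum_congr rfl fun I hI => prod_insert (hnot I hI))
  · intro I hI J hJ hIJ
    rw [← erase_insert (hnot I hI), ← erase_insert (hnot J hJ)]
    exact congrArg (·.erase a) hIJ
  · refine disjoint_left.2 fun I hI hI' => ?_
    obtain ⟨J, -, rfl⟩ := mem_image.1 hI'
    exact ha ((mem_powersetCard.1 hI).1 (mem_insert_self a J))

end CommSemiring

theorem pow_le_esymm [CommSemiring R] [PartialOrder R] [IsOrderedRing R] {s : Finset ι} {k : ℕ}
    (hk : k ≤ #s) {b : R} {x : ι → R} (hb : 0 ≤ b) (hbx : ∀ i ∈ s, b ≤ x i) :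
    b ^ k ≤ s.esymm k x := by
  obtain ⟨t, hts, rfl⟩ := exists_subset_card_eq hk
  calc b ^ #t = ∏ _i ∈ t, b := (prod_const b).symm
    _ ≤ ∏ i ∈ t, x i := prod_le_prod (fun _ _ => hb) fun i hi => hbx i (hts hi)
    _ ≤ s.esymm #t x :=
      single_le_sum (f := fun I => ∏ i ∈ I, x i)
        (fun _ hI => prod_nonneg fun i hi => hb.trans (hbx i ((mem_powersetCard.1 hI).1 hi)))
        (mem_powersetCard.2 ⟨hts, rfl⟩)

end Finset

variable {ι R : Type*}

section CommSemiring

variable [CommSemiring R]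

def pricePoly (m : ℕ) (s : Finset ι) (x : ι → R) : R :=
  (m + 1)! * s.esymm (m + 1) x + ∑ i ∈ s, x i ^ (m + 1)

theorem pricePoly_of_card_le {m : ℕ} {s : Finset ι} (hs : #s ≤ m) (x : ι → R) :
    pricePoly m s x = ∑ i ∈ s, x i ^ (m + 1) := by
  rw [pricePoly, esymm_eq_zero_of_card_lt (Nat.lt_succ_of_le hs), mul_zero, zero_add]

theorem pricePoly_eq_of_subset {m : ℕ} {s t : Finset ι} (hts : t ⊆ s) {x : ι → R}
    (hx : ∀ i ∈ s, i ∉ t → x i = 0) : pricePoly m s x = pricePoly m t x := by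
  rw [pricePoly, pricePoly, esymm_eq_of_subset hts hx,
    sum_subset hts fun i hi hit => by rw [hx i hi hit, zero_pow m.succ_ne_zero]]

theorem pricePoly_uniform {K : Type*} [Field K] [DecidableEq ι] {m : ℕ} {s t : Finset ι}
    (hts : t ⊆ s) (ht : #t = m) (hm : (m : K) ≠ 0) :
    pricePoly m s (fun i => if i ∈ t then (m : K)⁻¹ else 0) = 1 / (m : K) ^ m := by
  rw [pricePoly_eq_of_subset hts fun i _ hit => if_neg hit, pricePoly_of_card_le ht.le,
    sum_congr rfl fun i hi => by rw [if_pos hi], sum_const, ht, nsmul_eq_mul,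
    one_div, inv_pow, pow_succ]
  field_simp

end CommSemiring

section Ordered

variable [CommRing R] [LinearOrder R] [IsStrictOrderedRing R]

theorem add_pow_le_pow_add_pow_add_factorial_mul {a b : R} (ha : 0 ≤ a) (hab : a ≤ b) {m : ℕ}
    (hm : 1 ≤ m) : (a + b) ^ (m + 1) ≤ a ^ (m + 1) + b ^ (m + 1) + (m + 1)! * (a * b ^ m) := by
  induction m, hm using Nat.le_induction with
  | base => norm_num; linarith [add_sq a b]
  | succ m hm ih =>
    have hb : 0 ≤ b := ha.trans hab
    set F : R := ((m + 1)! : R)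
    have h1 : a ^ (m + 1) * b ≤ a * b ^ (m + 1) :=
      calc a ^ (m + 1) * b = a * a ^ m * b := by ring
        _ ≤ a * b ^ m * b := by gcongr
        _ = a * b ^ (m + 1) := by ring
    have h2 : F * (a * (a * b ^ m)) ≤ F * (a * b ^ (m + 1)) :=
      calc F * (a * (a * b ^ m)) ≤ F * (b * (a * b ^ m)) := by gcongr
        _ = F * (a * b ^ (m + 1)) := by ring
    have hfac : 2 * (a * b ^ (m + 1)) ≤ m * F * (a * b ^ (m + 1)) := by
      gcongr
      have : 1 * 2! ≤ m * (m + 1)! := Nat.mul_le_mul hm (Nat.factorial_le (by omega))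
      simp only [F]
      exact_mod_cast this
    have hF : (((m + 1 + 1)! : ℕ) : R) = (m + 2) * F := by
      rw [Nat.factorial_succ]; push_cast; ring
    calc (a + b) ^ (m + 1 + 1) = (a + b) * (a + b) ^ (m + 1) := pow_succ' _ _
      _ ≤ (a + b) * (a ^ (m + 1) + b ^ (m + 1) + F * (a * b ^ m)) := by gcongr
      _ ≤ _ := by rw [hF]; linear_combination h1 + h2 + hfac

theorem sum_pow_le_mul_pricePoly_of_card_le {m : ℕ} {s : Finset ι} (hs : #s ≤ m) {x : ι → R}
    (hx : ∀ i ∈ s, 0 ≤ x i) : (∑ i ∈ s, x i) ^ (m + 1) ≤ (m : R) ^ m * pricePoly m s x := by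
  rw [pricePoly_of_card_le hs]
  calc (∑ i ∈ s, x i) ^ (m + 1) ≤ (#s : R) ^ m * ∑ i ∈ s, x i ^ (m + 1) :=
        pow_sum_le_card_mul_sum_pow hx m
    _ ≤ (m : R) ^ m * ∑ i ∈ s, x i ^ (m + 1) := by
        gcongr
        exact sum_nonneg fun i hi => pow_nonneg (hx i hi) _

theorem pricePoly_merge_le [DecidableEq ι] {n : ℕ} {r : Finset ι} {i j : ι}
    (hi : i ∉ insert j r) (hj : j ∉ r) {x : ι → R} (hxi : 0 ≤ x i) (hij : x i ≤ x j)
    (hjr : ∀ k ∈ r, x j ≤ x k) (hr : n ≤ #r) :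
    pricePoly (n + 1) (insert j r) (Function.update x j (x i + x j)) ≤
      pricePoly (n + 1) (insert i (insert j r)) x := by
  set y := Function.update x j (x i + x j)
  have hyr : ∀ k ∈ r, y k = x k := fun k hk =>
    Function.update_of_ne (ne_of_mem_of_not_mem hk hj) _ _
  have hyj : y j = x i + x j := Function.update_self _ _ _
  have hsum : ∑ k ∈ r, y k ^ (n + 1 + 1) = ∑ k ∈ r, x k ^ (n + 1 + 1) :=
    sum_congr rfl fun k hk => by rw [hyr k hk]
  have hxj : 0 ≤ x j := hxi.trans hij
  have hbin := add_pow_le_pow_add_pow_add_factorial_mul hxi hij (by omega : 1 ≤ n + 1)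
  have hlow : ((n + 1 + 1)! : R) * (x i * x j ^ (n + 1)) ≤
      (n + 1 + 1)! * (x i * (x j * r.esymm n x)) := by
    rw [pow_succ']
    gcongr
    exact pow_le_esymm hr hxj hjr
  simp only [pricePoly, esymm_insert_succ hi, esymm_insert_succ hj, sum_insert hi, sum_insert hj,
    esymm_congr hyr, hyj, hsum]
  linarith

theorem sum_pow_le_mul_pricePoly {m : ℕ} (hm : 1 ≤ m) (s : Finset ι) {x : ι → R}
    (hx : ∀ i ∈ s, 0 ≤ x i) : (∑ i ∈ s, x i) ^ (m + 1) ≤ (m : R) ^ m * pricePoly m s x := by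
  classical
  obtain ⟨n, rfl⟩ : ∃ n, m = n + 1 := ⟨m - 1, by omega⟩
  induction s using Finset.strongInduction generalizing x with
  | H s ih =>
  rcases le_or_gt #s (n + 1) with hs | hs
  · exact sum_pow_le_mul_pricePoly_of_card_le hs hx
  obtain ⟨i, his, hi⟩ := exists_min_image s x (card_pos.1 (by omega))
  obtain ⟨j, hjs, hj⟩ := exists_min_image (s.erase i) x
    (card_pos.1 (by rw [card_erase_of_mem his]; omega))
  set r := (s.erase i).erase j
  have hs_eq : insert i (insert j r) = s := by rw [insert_erase hjs, insert_erase his]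
  have hjr : j ∉ r := notMem_erase j _
  have hir : i ∉ insert j r := by rw [insert_erase hjs]; exact notMem_erase i s
  set y := Function.update x j (x i + x j)
  have hyr : ∀ k ∈ r, y k = x k := fun k hk =>
    Function.update_of_ne (ne_of_mem_of_not_mem hk hjr) _ _
  have hyj : y j = x i + x j := Function.update_self _ _ _
  have hy : ∀ k ∈ insert j r, 0 ≤ y k := by
    intro k hk
    rcases mem_insert.1 hk with rfl | hk
    · exact hyj ▸ add_nonneg (hx i his) (hx k (mem_of_mem_erase hjs))
    · exact hyr k hk ▸ hx k (mem_of_mem_erase (mem_of_mem_erase hk))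
  have hsum : ∑ k ∈ s, x k = ∑ k ∈ insert j r, y k := by
    rw [← hs_eq, sum_insert hir, sum_insert hjr, sum_insert hjr, hyj, sum_congr rfl hyr, add_assoc]
  have hr : n ≤ #r := by
    rw [card_erase_of_mem hjs, card_erase_of_mem his]
    omega
  calc (∑ k ∈ s, x k) ^ (n + 1 + 1) = (∑ k ∈ insert j r, y k) ^ (n + 1 + 1) := by rw [hsum]
    _ ≤ (↑(n + 1) : R) ^ (n + 1) * pricePoly (n + 1) (insert j r) y :=
        ih _ (by rw [← hs_eq]; exact ssubset_insert hir) hy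
    _ ≤ (↑(n + 1) : R) ^ (n + 1) * pricePoly (n + 1) s x := by
        rw [← hs_eq]
        gcongr
        exact pricePoly_merge_le hir hjr (hx i his) (hi j (mem_of_mem_erase hjs))
          (fun k hk => hj k (mem_of_mem_erase hk)) hr

end Ordered

theorem stmt_19 (m N : ℕ) (hm : 2 ≤ m) (hN : m ≤ N) :
    IsLeast {s : ℝ | ∃ x : Fin N → ℝ, (∀ i, 0 ≤ x i) ∧ (∑ i, x i) = 1 ∧
        s = (Nat.factorial (m + 1) : ℝ) *
              ∑ I ∈ (Finset.univ : Finset (Fin N)).powersetCard (m + 1), ∏ i ∈ I, x i +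
            ∑ i, (x i) ^ (m + 1)}
      (1 / (m : ℝ) ^ m) := by
  have hm0 : (m : ℝ) ≠ 0 := by positivity
  constructor
  · obtain ⟨t, -, ht⟩ := exists_subset_card_eq (s := (univ : Finset (Fin N))) (by simpa using hN)
    refine ⟨fun i => if i ∈ t then (m : ℝ)⁻¹ else 0, fun i => by positivity, ?_,
      (pricePoly_uniform (subset_univ t) ht hm0).symm⟩
    rw [sum_ite_mem, univ_inter, sum_const, ht, nsmul_eq_mul, mul_inv_cancel₀ hm0]
  · rintro _ ⟨x, hx, hsum, rfl⟩
    have h := sum_pow_le_mul_pricePoly (m := m) (by omega) univ fun i _ => hx i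
    rw [hsum, one_pow] at h
    exact (div_le_iff₀' (by positivity)).2 h
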